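/- If 0 < w_D < ∞, then lim_{y↓0} (E[U(H(·),·)] − v(y))/y = w_D. -/

import Mathlib

/-!
Since `Ũ(x) ≥ U(H) − x H`, every `ξ ∈ D` gives `E[Ũ(yξ)] ≥ E[U(H)] − y E[ξH] ≥ E[U(H)] − y w_D`,
so the difference quotient never exceeds `w_D`. Conversely, strict concavity forces `U(z) < U(H)`
for `z < H`, whence `(U(H) − Ũ(x))/x → H` as `x ↓ 0` pointwise. The quotients
`(U(H) − Ũ(yξ))/y` lie in `[0, ξH]`, so by dominated convergence
`(E[U(H)] − E[Ũ(yξ)])/y → E[ξH]`; as `v(y) ≤ E[Ũ(yξ)]`, choosing `ξ` with `E[ξH]` close to `w_D`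
gives the lower bound.
-/

open MeasureTheory Set Filter
open scoped ENNReal NNReal Topology

/-- The convex dual `Ũ(y) := sup_{0 ≤ z ≤ H} (U(z) − y·z)` (for a fixed state). -/
noncomputable def dualU (U : ℝ → ℝ) (H y : ℝ) : ℝ :=
  sSup ((fun z => U z - y * z) '' Set.Icc 0 H)

/-- `min(I(y), H)`, where `I(y) := inf{ z ∈ (0,H) : U'(z) < y }` with the
conventions `inf ∅ = +∞` and `I(0) = +∞` (so that the minimum with `H`
equals `H` in those cases). -/
noncomputable def IminU (U : ℝ → ℝ) (H y : ℝ) : ℝ :=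
  sInf ({z | z ∈ Set.Ioo 0 H ∧ deriv U z < y} ∪ {H})

/-- The dual value function `v(y) := inf_{ξ ∈ D} E[Ũ(y·ξ(·), ·)]`. -/
noncomputable def dualValue {Ω : Type*} [MeasurableSpace Ω] (μ : Measure Ω)
    (U : Ω → ℝ → ℝ) (H : Ω → ℝ) (D : Set (Ω → ℝ)) (y : ℝ) : ℝ :=
  sInf ((fun ξ => ∫ ω, dualU (U ω) (H ω) (y * ξ ω) ∂μ) '' D)

/-- `w_D := sup_{ξ ∈ D} E[ξ·H]` (as an extended nonnegative real). -/
noncomputable def wDual {Ω : Type*} [MeasurableSpace Ω] (μ : Measure Ω)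
    (H : Ω → ℝ) (D : Set (Ω → ℝ)) : ℝ≥0∞ :=
  ⨆ ξ ∈ D, ∫⁻ ω, ENNReal.ofReal (ξ ω * H ω) ∂μ

theorem ContinuousOn.sSup_image_Icc_eq_iSup_rat {g : ℝ → ℝ} {a b : ℝ} (hab : a ≤ b)
    (hg : ContinuousOn g (Icc a b)) :
    sSup (g '' Icc a b) = ⨆ q : ℚ, g (max a (min b q)) := by
  set f : ℝ → ℝ := fun x => g (projIcc a b hab x)
  have hf : Continuous f := hg.comp_continuous (continuous_subtype_val.comp continuous_projIcc)
    fun x => (projIcc a b hab x).2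
  have hrange : g '' Icc a b = range f := by
    rw [show f = g ∘ Subtype.val ∘ projIcc a b hab from rfl, range_comp, range_comp,
      range_projIcc, image_univ, Subtype.range_coe]
  rw [hrange, sSup_range, ← Rat.denseRange_cast.ciSup' hf,
    ← rangeFactorization_surjective.iSup_comp]
  rfl

theorem StrictConcaveOn.strictMonoOn_of_monotoneOn {s : Set ℝ} {f : ℝ → ℝ}
    (hf : StrictConcaveOn ℝ s f) (hmono : MonotoneOn f s) : StrictMonoOn f s := by
  intro x hx y hy hxy
  refine (hmono hx hy hxy.le).lt_of_ne fun hfxy => ?_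
  have hmid := hf.2 hx hy hxy.ne (by norm_num : (0 : ℝ) < 1 / 2) (by norm_num : (0 : ℝ) < 1 / 2)
    (by norm_num)
  have hm : (1 / 2 : ℝ) • x + (1 / 2 : ℝ) • y ∈ s := hf.1 hx hy (by norm_num) (by norm_num)
    (by norm_num)
  have hle : f ((1 / 2 : ℝ) • x + (1 / 2 : ℝ) • y) ≤ f y :=
    hmono hm hy (by simp only [smul_eq_mul]; linarith)
  simp only [smul_eq_mul] at hmid hle
  linarith

section Pointwise

variable {U : ℝ → ℝ} {H y : ℝ}

theorem sub_mul_le_of_mem_Icc (hUmono : MonotoneOn U (Ici 0)) (hy : 0 ≤ y) {z : ℝ}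
    (hz : z ∈ Icc 0 H) : U z - y * z ≤ U H := by
  have : U z ≤ U H := hUmono hz.1 (hz.1.trans hz.2) hz.2
  nlinarith [hz.1]

theorem dualU_le (hH : 0 ≤ H) (hUmono : MonotoneOn U (Ici 0)) (hy : 0 ≤ y) :
    dualU U H y ≤ U H :=
  csSup_le ((nonempty_Icc.2 hH).image _)
    (forall_mem_image.2 fun _ => sub_mul_le_of_mem_Icc hUmono hy)

theorem sub_mul_le_dualU (hH : 0 ≤ H) (hUmono : MonotoneOn U (Ici 0)) (hy : 0 ≤ y) :
    U H - y * H ≤ dualU U H y :=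
  le_csSup ⟨U H, forall_mem_image.2 fun _ => sub_mul_le_of_mem_Icc hUmono hy⟩
    ⟨H, right_mem_Icc.2 hH, rfl⟩

theorem dualU_le_max {z₀ : ℝ} (hz₀ : z₀ ∈ Icc 0 H) (hUmono : MonotoneOn U (Ici 0))
    (hy : 0 ≤ y) : dualU U H y ≤ max (U z₀) (U H - y * z₀) := by
  refine csSup_le ((nonempty_Icc.2 (hz₀.1.trans hz₀.2)).image _) ?_
  rintro _ ⟨z, hz, rfl⟩
  rcases le_total z z₀ with hzz₀ | hz₀z
  · have : U z ≤ U z₀ := hUmono hz.1 hz₀.1 hzz₀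
    exact le_max_of_le_left (by nlinarith [hz.1])
  · have : U z ≤ U H := hUmono hz.1 (hz.1.trans hz.2) hz.2
    exact le_max_of_le_right (by nlinarith)

theorem tendsto_sub_dualU_div (hH : 0 < H) (hUmono : MonotoneOn U (Ici 0))
    (hUconc : StrictConcaveOn ℝ (Ioo 0 H) U) :
    Tendsto (fun x => (U H - dualU U H x) / x) (𝓝[>] 0) (𝓝 H) := by
  refine tendsto_order.2 ⟨fun a ha => ?_, fun a ha => ?_⟩
  · obtain ⟨z₀, hz₀, hz₀H⟩ := exists_between (max_lt ha hH)
    obtain ⟨z₁, hz₀₁, hz₁H⟩ := exists_between hz₀H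
    have hz₀pos : 0 < z₀ := (le_max_right a 0).trans_lt hz₀
    have hstrict : StrictMonoOn U (Ioo 0 H) := hUconc.strictMonoOn_of_monotoneOn
      (hUmono.mono (Ioo_subset_Ioi_self.trans Ioi_subset_Ici_self))
    have hUz₀ : U z₀ < U H :=
      (hstrict ⟨hz₀pos, hz₀H⟩ ⟨hz₀pos.trans hz₀₁, hz₁H⟩ hz₀₁).trans_le
        (hUmono (hz₀pos.trans hz₀₁).le hH.le hz₁H.le)
    have hgap : Tendsto (fun x => (U H - U z₀) * x⁻¹) (𝓝[>] 0) atTop :=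
      tendsto_inv_nhdsGT_zero.const_mul_atTop (sub_pos.2 hUz₀)
    filter_upwards [hgap.eventually_gt_atTop a, self_mem_nhdsWithin] with x hax (hx : 0 < x)
    rw [lt_div_iff₀ hx]
    have hmax := dualU_le_max ⟨hz₀pos.le, hz₀H.le⟩ hUmono hx.le
    have h₁ : a * x < U H - U z₀ := by rwa [← div_eq_mul_inv, lt_div_iff₀ hx] at hax
    have h₂ : a * x < z₀ * x := mul_lt_mul_of_pos_right ((le_max_left a 0).trans_lt hz₀) hx
    rw [le_max_iff] at hmax
    rcases hmax with h | h <;> linarith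
  · filter_upwards [self_mem_nhdsWithin] with x (hx : 0 < x)
    rw [div_lt_iff₀ hx]
    nlinarith [sub_mul_le_dualU hH.le hUmono hx.le]

theorem dualU_zero (hH : 0 ≤ H) (hUmono : MonotoneOn U (Ici 0)) : dualU U H 0 = U H :=
  (dualU_le hH hUmono le_rfl).antisymm (by simpa using sub_mul_le_dualU hH hUmono le_rfl)

theorem tendsto_sub_dualU_mul_div {c : ℝ} (hc : 0 ≤ c) (hH : 0 < H)
    (hUmono : MonotoneOn U (Ici 0)) (hUconc : StrictConcaveOn ℝ (Ioo 0 H) U) :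
    Tendsto (fun y => (U H - dualU U H (y * c)) / y) (𝓝[>] 0) (𝓝 (c * H)) := by
  rcases hc.eq_or_lt with rfl | hc
  · simp [dualU_zero hH.le hUmono]
  have hscale : Tendsto (fun y => y * c) (𝓝[>] 0) (𝓝[>] 0) :=
    tendsto_nhdsWithin_of_tendsto_nhds_of_eventually_within _
      (((continuous_mul_const c).tendsto' 0 0 (zero_mul c)).mono_left nhdsWithin_le_nhds)
      (eventually_nhdsWithin_of_forall fun y (hy : 0 < y) => mul_pos hy hc)
  refine (((tendsto_sub_dualU_div hH hUmono hUconc).comp hscale).const_mul c).congr'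
    (eventually_nhdsWithin_of_forall fun y (hy : 0 < y) => ?_)
  rw [Function.comp_apply, mul_div_assoc', div_eq_div_iff (by positivity) hy.ne']
  ring

end Pointwise

section Measurability

variable {Ω : Type*} [MeasurableSpace Ω] {U : Ω → ℝ → ℝ}

theorem measurable_comp_of_continuousOn_Ici (hUcont : ∀ ω, ContinuousOn (U ω) (Ici 0))
    (hUmeas : ∀ z, Measurable fun ω => U ω z) {a : Ω → ℝ} (ha : Measurable a)
    (ha0 : ∀ ω, 0 ≤ a ω) : Measurable fun ω => U ω (a ω) := by
  have hjoint : Measurable (Function.uncurry fun z ω => U ω (max z 0)) :=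
    measurable_uncurry_of_continuous_of_measurable
      (fun ω => (hUcont ω).comp_continuous (continuous_id.max continuous_const)
        fun z => le_max_right z 0)
      fun z => hUmeas _
  convert hjoint.comp (ha.prodMk measurable_id) using 1
  ext ω
  simp [ha0 ω]

theorem measurable_dualU {H : Ω → ℝ} (hHmeas : Measurable H) (hH : ∀ ω, 0 ≤ H ω)
    (hUcont : ∀ ω, ContinuousOn (U ω) (Ici 0)) (hUmeas : ∀ z, Measurable fun ω => U ω z)
    {c : Ω → ℝ} (hc : Measurable c) :
    Measurable fun ω => dualU (U ω) (H ω) (c ω) := by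
  have hclamp : ∀ q : ℚ, Measurable fun ω => max 0 (min (H ω) q) :=
    fun q => measurable_const.max (hHmeas.min measurable_const)
  have hsup : ∀ ω, dualU (U ω) (H ω) (c ω) =
      ⨆ q : ℚ, (U ω (max 0 (min (H ω) q)) - c ω * max 0 (min (H ω) q)) := fun ω =>
    ContinuousOn.sSup_image_Icc_eq_iSup_rat (hH ω)
      (((hUcont ω).mono Icc_subset_Ici_self).sub (continuousOn_const.mul continuousOn_id))
  simp_rw [hsup]
  exact Measurable.iSup fun q => (measurable_comp_of_continuousOn_Ici hUcont hUmeas (hclamp q)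
    fun ω => le_max_left _ _).sub (hc.mul (hclamp q))

end Measurability

section Integrals

variable {Ω : Type*} [MeasurableSpace Ω] {μ : Measure Ω} {U : Ω → ℝ → ℝ} {H ξ : Ω → ℝ} {y : ℝ}

theorem integrable_dualU (hHmeas : Measurable H) (hH : ∀ ω, 0 ≤ H ω)
    (hUmono : ∀ ω, MonotoneOn (U ω) (Ici 0)) (hUcont : ∀ ω, ContinuousOn (U ω) (Ici 0))
    (hUmeas : ∀ z, Measurable fun ω => U ω z) (hUint : Integrable (fun ω => U ω (H ω)) μ)
    (hξmeas : Measurable ξ) (hξ : ∀ ω, 0 ≤ ξ ω) (hξH : Integrable (fun ω => ξ ω * H ω) μ)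
    (hy : 0 ≤ y) : Integrable (fun ω => dualU (U ω) (H ω) (y * ξ ω)) μ :=
  integrable_of_le_of_le
    (measurable_dualU hHmeas hH hUcont hUmeas (hξmeas.const_mul y)).aestronglyMeasurable
    (ae_of_all _ fun ω => by
      have := sub_mul_le_dualU (hH ω) (hUmono ω) (mul_nonneg hy (hξ ω))
      simp only [Pi.sub_apply]
      linarith)
    (ae_of_all _ fun ω => dualU_le (hH ω) (hUmono ω) (mul_nonneg hy (hξ ω)))
    (hUint.sub (hξH.const_mul y)) hUint

theorem integral_sub_mul_le_integral_dualU (hHmeas : Measurable H) (hH : ∀ ω, 0 ≤ H ω)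
    (hUmono : ∀ ω, MonotoneOn (U ω) (Ici 0)) (hUcont : ∀ ω, ContinuousOn (U ω) (Ici 0))
    (hUmeas : ∀ z, Measurable fun ω => U ω z) (hUint : Integrable (fun ω => U ω (H ω)) μ)
    (hξmeas : Measurable ξ) (hξ : ∀ ω, 0 ≤ ξ ω) (hξH : Integrable (fun ω => ξ ω * H ω) μ)
    (hy : 0 ≤ y) :
    ∫ ω, U ω (H ω) ∂μ - y * ∫ ω, ξ ω * H ω ∂μ ≤ ∫ ω, dualU (U ω) (H ω) (y * ξ ω) ∂μ := by
  rw [← integral_const_mul, ← integral_sub hUint (hξH.const_mul y)]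
  refine integral_mono (hUint.sub (hξH.const_mul y))
    (integrable_dualU hHmeas hH hUmono hUcont hUmeas hUint hξmeas hξ hξH hy) fun ω => ?_
  have := sub_mul_le_dualU (hH ω) (hUmono ω) (mul_nonneg hy (hξ ω))
  simp only
  linarith

theorem tendsto_sub_integral_dualU_div (hHmeas : Measurable H) (hH : ∀ ω, 0 < H ω)
    (hUmono : ∀ ω, MonotoneOn (U ω) (Ici 0)) (hUcont : ∀ ω, ContinuousOn (U ω) (Ici 0))
    (hUconc : ∀ ω, StrictConcaveOn ℝ (Ioo 0 (H ω)) (U ω))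
    (hUmeas : ∀ z, Measurable fun ω => U ω z) (hUint : Integrable (fun ω => U ω (H ω)) μ)
    (hξmeas : Measurable ξ) (hξ : ∀ ω, 0 ≤ ξ ω) (hξH : Integrable (fun ω => ξ ω * H ω) μ) :
    Tendsto (fun y => (∫ ω, U ω (H ω) ∂μ - ∫ ω, dualU (U ω) (H ω) (y * ξ ω) ∂μ) / y)
      (𝓝[>] 0) (𝓝 (∫ ω, ξ ω * H ω ∂μ)) := by
  have hH0 : ∀ ω, 0 ≤ H ω := fun ω => (hH ω).le
  have hUH : Measurable fun ω => U ω (H ω) :=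
    measurable_comp_of_continuousOn_Ici hUcont hUmeas hHmeas hH0
  have hDCT := tendsto_integral_filter_of_dominated_convergence (μ := μ)
    (F := fun y ω => (U ω (H ω) - dualU (U ω) (H ω) (y * ξ ω)) / y) (l := 𝓝[>] (0 : ℝ))
    _ (eventually_nhdsWithin_of_forall fun y _ => ((hUH.sub (measurable_dualU hHmeas hH0 hUcont
      hUmeas (hξmeas.const_mul y))).div_const y).aestronglyMeasurable)
    (eventually_nhdsWithin_of_forall fun y (hy : 0 < y) => ae_of_all _ fun ω => by
      have hlow := sub_mul_le_dualU (hH0 ω) (hUmono ω) (mul_nonneg hy.le (hξ ω))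
      have hup := dualU_le (hH0 ω) (hUmono ω) (mul_nonneg hy.le (hξ ω))
      rw [Real.norm_eq_abs, abs_of_nonneg (div_nonneg (sub_nonneg.2 hup) hy.le),
        div_le_iff₀ hy]
      linarith)
    hξH (ae_of_all _ fun ω => tendsto_sub_dualU_mul_div (hξ ω) (hH ω) (hUmono ω) (hUconc ω))
  refine hDCT.congr' (eventually_nhdsWithin_of_forall fun y (hy : 0 < y) => ?_)
  rw [integral_div, integral_sub hUint
    (integrable_dualU hHmeas hH0 hUmono hUcont hUmeas hUint hξmeas hξ hξH hy.le)]

end Integrals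

section DualSet

variable {Ω : Type*} [MeasurableSpace Ω] {μ : Measure Ω} {U : Ω → ℝ → ℝ} {H ξ : Ω → ℝ}
  {D : Set (Ω → ℝ)} {y b : ℝ}

theorem nonempty_of_wDual_pos (h : 0 < wDual μ H D) : D.Nonempty := by
  contrapose! h
  simp [wDual, h]

theorem lintegral_le_wDual (hξ : ξ ∈ D) :
    ∫⁻ ω, ENNReal.ofReal (ξ ω * H ω) ∂μ ≤ wDual μ H D :=
  le_iSup₂ (f := fun ξ (_ : ξ ∈ D) => ∫⁻ ω, ENNReal.ofReal (ξ ω * H ω) ∂μ) ξ hξ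

theorem integrable_mul_of_mem_of_wDual_ne_top (hw : wDual μ H D ≠ ⊤) (hξ : ξ ∈ D)
    (hmeas : AEStronglyMeasurable (fun ω => ξ ω * H ω) μ) (hnn : ∀ ω, 0 ≤ ξ ω * H ω) :
    Integrable (fun ω => ξ ω * H ω) μ :=
  ⟨hmeas, (hasFiniteIntegral_iff_ofReal (ae_of_all _ hnn)).2
    ((lintegral_le_wDual hξ).trans_lt hw.lt_top)⟩

theorem integral_mul_le_toReal_wDual (hw : wDual μ H D ≠ ⊤) (hξ : ξ ∈ D)
    (hmeas : AEStronglyMeasurable (fun ω => ξ ω * H ω) μ) (hnn : ∀ ω, 0 ≤ ξ ω * H ω) :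
    ∫ ω, ξ ω * H ω ∂μ ≤ (wDual μ H D).toReal := by
  rw [integral_eq_lintegral_of_nonneg_ae (ae_of_all _ hnn) hmeas]
  exact ENNReal.toReal_mono hw (lintegral_le_wDual hξ)

theorem exists_mem_lt_integral_mul (hD : D.Nonempty) (hw : wDual μ H D ≠ ⊤)
    (hmeas : ∀ ξ ∈ D, AEStronglyMeasurable (fun ω => ξ ω * H ω) μ)
    (hnn : ∀ ξ ∈ D, ∀ ω, 0 ≤ ξ ω * H ω) {a : ℝ} (ha : a < (wDual μ H D).toReal) :
    ∃ ξ ∈ D, a < ∫ ω, ξ ω * H ω ∂μ := by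
  rcases lt_or_ge a 0 with ha0 | ha0
  · obtain ⟨ξ, hξ⟩ := hD
    exact ⟨ξ, hξ, ha0.trans_le (integral_nonneg (hnn ξ hξ))⟩
  obtain ⟨ξ, hξ, haξ⟩ := lt_biSup_iff.1 ((ENNReal.ofReal_lt_iff_lt_toReal ha0 hw).2 ha)
  refine ⟨ξ, hξ, ?_⟩
  rwa [integral_eq_lintegral_of_nonneg_ae (ae_of_all _ (hnn ξ hξ)) (hmeas ξ hξ),
    ← ENNReal.ofReal_lt_iff_lt_toReal ha0 (ne_top_of_le_ne_top hw (lintegral_le_wDual hξ))]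

theorem le_dualValue (hD : D.Nonempty)
    (h : ∀ ξ ∈ D, b ≤ ∫ ω, dualU (U ω) (H ω) (y * ξ ω) ∂μ) : b ≤ dualValue μ U H D y :=
  le_csInf (hD.image _) (forall_mem_image.2 h)

theorem dualValue_le_integral (h : ∀ ξ ∈ D, b ≤ ∫ ω, dualU (U ω) (H ω) (y * ξ ω) ∂μ)
    (hξ : ξ ∈ D) : dualValue μ U H D y ≤ ∫ ω, dualU (U ω) (H ω) (y * ξ ω) ∂μ :=
  csInf_le ⟨b, forall_mem_image.2 h⟩ ⟨ξ, hξ, rfl⟩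

end DualSet

theorem stmt8_general {Ω : Type*} [MeasurableSpace Ω] (μ : Measure Ω)
    (H : Ω → ℝ) (hHmeas : Measurable H) (hHpos : ∀ ω, 0 < H ω)
    (U : Ω → ℝ → ℝ)
    (hUmono : ∀ ω, MonotoneOn (U ω) (Set.Ici 0))
    (hUcont : ∀ ω, ContinuousOn (U ω) (Set.Ici 0))
    (hUconc : ∀ ω, StrictConcaveOn ℝ (Set.Ioo 0 (H ω)) (U ω))
    (hUmeas : ∀ z, Measurable fun ω => U ω z)
    (hUint : Integrable (fun ω => U ω (H ω)) μ)
    (D : Set (Ω → ℝ))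
    (hDmeas : ∀ ξ ∈ D, Measurable ξ)
    (hDpos : ∀ ξ ∈ D, ∀ ω, 0 ≤ ξ ω)
    (hw0 : 0 < wDual μ H D) (hwtop : wDual μ H D < ⊤) :
    Tendsto (fun y => ((∫ ω, U ω (H ω) ∂μ) - dualValue μ U H D y) / y)
      (nhdsWithin 0 (Set.Ioi 0)) (nhds (wDual μ H D).toReal) := by
  have hD : D.Nonempty := nonempty_of_wDual_pos hw0
  have hH0 : ∀ ω, 0 ≤ H ω := fun ω => (hHpos ω).le
  have hξHmeas : ∀ ξ ∈ D, AEStronglyMeasurable (fun ω => ξ ω * H ω) μ :=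
    fun ξ hξ => ((hDmeas ξ hξ).mul hHmeas).aestronglyMeasurable
  have hξHnn : ∀ ξ ∈ D, ∀ ω, 0 ≤ ξ ω * H ω := fun ξ hξ ω => mul_nonneg (hDpos ξ hξ ω) (hH0 ω)
  have hξH : ∀ ξ ∈ D, Integrable (fun ω => ξ ω * H ω) μ := fun ξ hξ =>
    integrable_mul_of_mem_of_wDual_ne_top hwtop.ne hξ (hξHmeas ξ hξ) (hξHnn ξ hξ)
  have hbound : ∀ y, 0 ≤ y → ∀ ξ ∈ D, (∫ ω, U ω (H ω) ∂μ) - y * (wDual μ H D).toReal ≤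
      ∫ ω, dualU (U ω) (H ω) (y * ξ ω) ∂μ := fun y hy ξ hξ =>
    (sub_le_sub_left (mul_le_mul_of_nonneg_left (integral_mul_le_toReal_wDual hwtop.ne hξ
      (hξHmeas ξ hξ) (hξHnn ξ hξ)) hy) _).trans (integral_sub_mul_le_integral_dualU hHmeas hH0
      hUmono hUcont hUmeas hUint (hDmeas ξ hξ) (hDpos ξ hξ) (hξH ξ hξ) hy)
  refine tendsto_order.2 ⟨fun a ha => ?_, fun a ha => ?_⟩
  · obtain ⟨ξ, hξ, haξ⟩ := exists_mem_lt_integral_mul hD hwtop.ne hξHmeas hξHnn ha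
    filter_upwards [(tendsto_sub_integral_dualU_div hHmeas hHpos hUmono hUcont hUconc hUmeas
      hUint (hDmeas ξ hξ) (hDpos ξ hξ) (hξH ξ hξ)).eventually (lt_mem_nhds haξ),
      self_mem_nhdsWithin] with y hay (hy : 0 < y)
    exact hay.trans_le (div_le_div_of_nonneg_right
      (sub_le_sub_left (dualValue_le_integral (hbound y hy.le) hξ) _) hy.le)
  · filter_upwards [self_mem_nhdsWithin] with y (hy : 0 < y)
    have hv := le_dualValue hD (hbound y hy.le)
    have hWa := mul_lt_mul_of_pos_left ha hy
    rw [div_lt_iff₀ hy]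
    linarith

/-- If `0 < w_D < ∞`, then `lim_{y↓0} (E[U(H(·),·)] − v(y))/y = w_D`. -/
theorem stmt8 {Ω : Type*} [MeasurableSpace Ω] (μ : Measure Ω) [IsProbabilityMeasure μ]
    (H : Ω → ℝ) (hHmeas : Measurable H) (hHpos : ∀ ω, 0 < H ω)
    (U : Ω → ℝ → ℝ)
    (hU0 : ∀ ω, ∀ z, 0 ≤ z → 0 ≤ U ω z)
    (hUmono : ∀ ω, MonotoneOn (U ω) (Set.Ici 0))
    (hUcont : ∀ ω, ContinuousOn (U ω) (Set.Ici 0))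
    (hUconc : ∀ ω, StrictConcaveOn ℝ (Set.Ioo 0 (H ω)) (U ω))
    (hUdiff : ∀ ω, ∀ z ∈ Set.Ioo 0 (H ω), DifferentiableAt ℝ (U ω) z)
    (hUcap : ∀ ω, ∀ w, 0 ≤ w → U ω w = U ω (min w (H ω)))
    (hUmeas : ∀ z, Measurable fun ω => U ω z)
    (hUint : Integrable (fun ω => U ω (H ω)) μ)
    (D : Set (Ω → ℝ)) (hDne : D.Nonempty)
    (hDmeas : ∀ ξ ∈ D, Measurable ξ)
    (hDpos : ∀ ξ ∈ D, ∀ ω, 0 ≤ ξ ω)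
    (hw0 : 0 < wDual μ H D) (hwtop : wDual μ H D < ⊤) :
    Tendsto (fun y => ((∫ ω, U ω (H ω) ∂μ) - dualValue μ U H D y) / y)
      (nhdsWithin 0 (Set.Ioi 0)) (nhds (wDual μ H D).toReal) :=
  stmt8_general μ H hHmeas hHpos U hUmono hUcont hUconc hUmeas hUint D hDmeas hDpos hw0 hwtop
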